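/- arXiv:2408.10875 — 3 statements merged into one kernel-verified Lean document; each statement's English description precedes it below -/
import Mathlib

section
/- Let I be a standard dyadic partition of [0,1]. For any A ∈ S(I) with A ≠ [0,1], the interval A ∪ Ā (the union of A with its conjugate) belongs to S(I). -/
/-- `IsSD l r` means `[l, r]` is a standard dyadic interval
`[k/2^m, (k+1)/2^m] ⊆ [0,1]` with `m ≥ 0`, `0 ≤ k ≤ 2^m - 1`. -/
def IsSD (l r : ℚ) : Prop :=
  ∃ m k : ℕ, k < 2 ^ m ∧ l = (k : ℚ) / 2 ^ m ∧ r = ((k : ℚ) + 1) / 2 ^ m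

/-- A left standard dyadic interval: `[k/2^m, (k+1)/2^m]` with `m ≥ 1` and `k` even. -/
def IsLeftSD (l r : ℚ) : Prop :=
  ∃ m k : ℕ, 1 ≤ m ∧ k < 2 ^ m ∧ Even k ∧
    l = (k : ℚ) / 2 ^ m ∧ r = ((k : ℚ) + 1) / 2 ^ m

/-- A right standard dyadic interval: `[k/2^m, (k+1)/2^m]` with `m ≥ 1` and `k` odd;
by convention `[0,1]` is also regarded as a right standard dyadic interval. -/
def IsRightSD (l r : ℚ) : Prop :=
  (l = 0 ∧ r = 1) ∨
    ∃ m k : ℕ, 1 ≤ m ∧ k < 2 ^ m ∧ Odd k ∧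
      l = (k : ℚ) / 2 ^ m ∧ r = ((k : ℚ) + 1) / 2 ^ m

/-- The set `S` of all standard dyadic intervals, an interval `[l, r]` being
represented by the pair `(l, r)` of its endpoints. -/
def SDSet : Set (ℚ × ℚ) := {A | IsSD A.1 A.2}

/-- The conjugate `Ā` of a standard dyadic interval `A ≠ [0,1]`:
the adjacent standard dyadic interval of the same length, on the right of `A`
if `A` is left, and on the left of `A` if `A` is right. -/
noncomputable def conjSD (A : ℚ × ℚ) : ℚ × ℚ := by
  classical
  exact if IsLeftSD A.1 A.2 then (A.2, 2 * A.2 - A.1) else (2 * A.1 - A.2, A.1)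

/-- The union of two overlapping or adjacent closed intervals, as an interval:
from the smaller left endpoint to the larger right endpoint.  In particular
`sdJoin A (conjSD A)` represents the interval `A ∪ Ā`. -/
def sdJoin (A B : ℚ × ℚ) : ℚ × ℚ := (min A.1 B.1, max A.2 B.2)

/-- A standard dyadic `n`-partition of `[0,1]`: breakpoints
`0 = a_0 < a_1 < ... < a_n = 1` with every `[a_i, a_{i+1}]` a standard dyadic
interval. -/
structure SDPartition (n : ℕ) where
  pts : Fin (n + 1) → ℚ
  first : pts 0 = 0
  last : pts (Fin.last n) = 1
  mono : StrictMono pts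
  sd : ∀ i : Fin n, IsSD (pts i.castSucc) (pts i.succ)

/-- `S(I)`: the set of intervals `[a_i, a_j]` (`i < j`) with endpoints breakpoints
of `I` that are standard dyadic intervals. -/
def SIn {n : ℕ} (I : SDPartition n) : Set (ℚ × ℚ) :=
  {A | (∃ i j : Fin (n + 1), i < j ∧ A = (I.pts i, I.pts j)) ∧ IsSD A.1 A.2}

/-- The midpoint of an interval. -/
def midQ (A : ℚ × ℚ) : ℚ := (A.1 + A.2) / 2

/-- The length of an interval. -/
def lenQ (A : ℚ × ℚ) : ℚ := A.2 - A.1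

/-- `E`: the set of dyadic rationals strictly between 0 and 1. -/
def Edyadic : Set ℚ := {q | ∃ m k : ℕ, 1 ≤ k ∧ k < 2 ^ m ∧ q = (k : ℚ) / 2 ^ m}

/-- `S_L(I) = S(I) ∩ S_L`. -/
def SLIn {n : ℕ} (I : SDPartition n) : Set (ℚ × ℚ) := {A ∈ SIn I | IsLeftSD A.1 A.2}

/-- `S_R(I) = S(I) ∩ S_R`. -/
def SRIn {n : ℕ} (I : SDPartition n) : Set (ℚ × ℚ) := {A ∈ SIn I | IsRightSD A.1 A.2}

/-- `M(I)`: the set of midpoints of the subintervals of `I`. -/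
def MIn {n : ℕ} (I : SDPartition n) : Set ℚ :=
  {q | ∃ i : Fin n, q = midQ (I.pts i.castSucc, I.pts i.succ)}

/-- `E(I)`: the union of `M(I)` with the breakpoints of `I` other than 0 and 1. -/
def EIn {n : ℕ} (I : SDPartition n) : Set ℚ :=
  MIn I ∪ {q | (∃ i : Fin (n + 1), I.pts i = q) ∧ q ≠ 0 ∧ q ≠ 1}


/-!
`A ∪ Ā` is the standard dyadic parent of `A`, so only its far endpoint has to be shown to be a
breakpoint of `I`. The reflection `x ↦ 1 - x` exchanges left and right intervals, so we may assume
`A = [l, r]` is left; then `Ā = [r, d]` with `d = 2r - l` is right, `[u/2^m, (u+1)/2^m]` with `u`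
odd. A standard dyadic interval whose left endpoint lies in `[u/2^m, (u+1)/2^m)` is contained in
it: it cannot be longer, since `u/2^m` is not a multiple of `1/2^(m-1)`. Let `C` be the cell of
`I` with `d` in `(C.1, C.2]`. Since the breakpoint `r` cannot lie inside `C`, `C` starts in
`[r, d)`, hence ends at `d`.
-/

open Set

lemma succ_mul_two_pow_le_of_odd {u j m p : ℕ} (hu : Odd u) (h₁ : u * 2 ^ p ≤ j * 2 ^ m)
    (h₂ : j * 2 ^ m < (u + 1) * 2 ^ p) : (j + 1) * 2 ^ m ≤ (u + 1) * 2 ^ p := by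
  rcases le_or_gt m p with hmp | hpm
  · obtain ⟨q, rfl⟩ := Nat.exists_eq_add_of_le hmp
    have h : j * 2 ^ m < (u + 1) * 2 ^ q * 2 ^ m := by rw [pow_add] at h₂; linarith
    calc (j + 1) * 2 ^ m ≤ (u + 1) * 2 ^ q * 2 ^ m :=
          Nat.mul_le_mul_right _ (Nat.lt_of_mul_lt_mul_right h)
      _ = (u + 1) * 2 ^ (m + q) := by ring
  · exfalso
    obtain ⟨q, rfl⟩ := Nat.exists_eq_add_of_lt hpm
    have hsplit : j * 2 ^ (p + q + 1) = j * 2 ^ (q + 1) * 2 ^ p := by ring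
    rw [hsplit] at h₁ h₂
    have hle : u ≤ j * 2 ^ (q + 1) := Nat.le_of_mul_le_mul_right h₁ (by positivity)
    have hlt : j * 2 ^ (q + 1) < u + 1 := Nat.lt_of_mul_lt_mul_right h₂
    have hu_eq : u = 2 * (j * 2 ^ q) := by rw [pow_succ] at hle hlt; linarith
    exact Nat.not_even_iff_odd.mpr hu ⟨j * 2 ^ q, by omega⟩

section Dyadic

variable {l r : ℚ}

lemma IsSD.nonneg (h : IsSD l r) : 0 ≤ l := by
  obtain ⟨m, k, -, rfl, -⟩ := h
  positivity

lemma IsSD.lt (h : IsSD l r) : l < r := by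
  obtain ⟨m, k, -, rfl, rfl⟩ := h
  gcongr
  linarith

lemma IsSD.le_one (h : IsSD l r) : r ≤ 1 := by
  obtain ⟨m, k, hk, -, rfl⟩ := h
  rw [div_le_one (by positivity)]
  exact_mod_cast hk

lemma IsSD.one_sub (h : IsSD l r) : IsSD (1 - r) (1 - l) := by
  obtain ⟨m, k, hk, rfl, rfl⟩ := h
  obtain ⟨k', hk'⟩ := Nat.exists_eq_add_of_lt hk
  have hcast : (2 : ℚ) ^ m = k + k' + 1 := by exact_mod_cast hk'
  refine ⟨m, k', by omega, ?_, ?_⟩ <;> field_simp <;> linarith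

lemma IsLeftSD.isSD (h : IsLeftSD l r) : IsSD l r := by
  obtain ⟨m, k, -, hk, -, rfl, rfl⟩ := h
  exact ⟨m, k, hk, rfl, rfl⟩

lemma IsLeftSD.isSD_parent (h : IsLeftSD l r) : IsSD l (2 * r - l) := by
  obtain ⟨m, k, hm, hk, ⟨a, rfl⟩, rfl, rfl⟩ := h
  obtain ⟨m, rfl⟩ := Nat.exists_eq_add_of_le' hm
  refine ⟨m, a, by rw [pow_succ] at hk; omega, ?_, ?_⟩ <;> push_cast <;> field_simp <;> ring

lemma IsLeftSD.isRightSD_conj (h : IsLeftSD l r) : IsRightSD r (2 * r - l) := by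
  obtain ⟨m, k, hm, hk, ⟨a, rfl⟩, rfl, rfl⟩ := h
  obtain ⟨m, rfl⟩ := Nat.exists_eq_add_of_le' hm
  refine .inr ⟨m + 1, a + a + 1, hm, by rw [pow_succ] at hk ⊢; omega, ⟨a, by ring⟩, ?_, ?_⟩ <;>
    push_cast <;> ring

lemma IsSD.isLeftSD_one_sub (h : IsSD l r) (hL : ¬IsLeftSD l r) (hne : (l, r) ≠ (0, 1)) :
    IsLeftSD (1 - r) (1 - l) := by
  obtain ⟨m, k, hk, rfl, rfl⟩ := h
  obtain rfl | hm := Nat.eq_zero_or_pos m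
  · obtain rfl : k = 0 := by simpa using hk
    exact absurd (by norm_num) hne
  have hodd : Odd k := Nat.not_even_iff_odd.mp fun hk' => hL ⟨m, k, hm, hk, hk', rfl, rfl⟩
  obtain ⟨k', hk'⟩ := Nat.exists_eq_add_of_lt hk
  have hcast : (2 : ℚ) ^ m = k + k' + 1 := by exact_mod_cast hk'
  have hev : Even (2 ^ m) := (Nat.even_pow' hm.ne').mpr even_two
  refine ⟨m, k', hm, by omega, ?_, ?_, ?_⟩
  · rw [hk'] at hev
    simpa [Nat.even_add_one, Nat.even_add, Nat.not_even_iff_odd.mpr hodd] using hev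
  all_goals field_simp; linarith

lemma IsRightSD.le_of_isSD {l' r' : ℚ} (hA : IsRightSD l r) (hB : IsSD l' r') (h₁ : l ≤ l')
    (h₂ : l' < r) : r' ≤ r := by
  obtain ⟨rfl, rfl⟩ | ⟨m, u, -, -, hu, rfl, rfl⟩ := hA
  · exact hB.le_one
  obtain ⟨p, j, -, rfl, rfl⟩ := hB
  rw [div_le_div_iff₀ (by positivity) (by positivity)] at h₁ ⊢
  rw [div_lt_div_iff₀ (by positivity) (by positivity)] at h₂
  exact_mod_cast succ_mul_two_pow_le_of_odd hu (by exact_mod_cast h₁) (by exact_mod_cast h₂)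

end Dyadic

namespace SDPartition

variable {n : ℕ} (I : SDPartition n)

lemma pts_notMem_Ioo (t : Fin n) (i : Fin (n + 1)) :
    I.pts i ∉ Ioo (I.pts t.castSucc) (I.pts t.succ) := by
  rintro ⟨h₁, h₂⟩
  rw [I.mono.lt_iff_lt, Fin.lt_def] at h₁ h₂
  simp only [Fin.val_castSucc, Fin.val_succ] at h₁ h₂
  omega

lemma exists_cell {x : ℚ} (h₀ : 0 < x) (h₁ : x ≤ 1) :
    ∃ t : Fin n, I.pts t.castSucc < x ∧ x ≤ I.pts t.succ := by
  by_contra! h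
  have hlt : ∀ i, I.pts i < x := Fin.induction (by rwa [I.first]) h
  exact (hlt (Fin.last n)).not_ge (I.last ▸ h₁)

def reflect : SDPartition n where
  pts i := 1 - I.pts i.rev
  first := by simp [I.last]
  last := by simp [I.first]
  mono _ _ h := sub_lt_sub_left (I.mono (Fin.rev_lt_rev.mpr h)) 1
  sd i := by simpa [Fin.rev_succ, Fin.rev_castSucc] using (I.sd i.rev).one_sub

lemma mem_range_reflect {x : ℚ} : x ∈ range I.reflect.pts ↔ 1 - x ∈ range I.pts := by
  constructor
  · rintro ⟨i, rfl⟩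
    exact ⟨i.rev, by simp [reflect]⟩
  · rintro ⟨i, hi⟩
    exact ⟨i.rev, by simp [reflect, hi]⟩

lemma mem_SIn_iff {A : ℚ × ℚ} :
    A ∈ SIn I ↔ A.1 ∈ range I.pts ∧ A.2 ∈ range I.pts ∧ IsSD A.1 A.2 := by
  constructor
  · rintro ⟨⟨i, j, -, rfl⟩, h⟩
    exact ⟨⟨i, rfl⟩, ⟨j, rfl⟩, h⟩
  · rintro ⟨⟨i, hi⟩, ⟨j, hj⟩, h⟩
    refine ⟨⟨i, j, I.mono.lt_iff_lt.mp (hi ▸ hj ▸ h.lt), by rw [hi, hj]⟩, h⟩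

end SDPartition

lemma IsLeftSD.two_mul_sub_mem_range {l r : ℚ} (hL : IsLeftSD l r) {n : ℕ} (I : SDPartition n)
    (hr : r ∈ range I.pts) : 2 * r - l ∈ range I.pts := by
  obtain ⟨j, rfl⟩ := hr
  have hlr := hL.isSD.lt
  obtain ⟨t, hlt, hle⟩ :=
    I.exists_cell (x := 2 * I.pts j - l) (by linarith [hL.isSD.nonneg]) hL.isSD_parent.le_one
  have hstart : I.pts j ≤ I.pts t.castSucc := by
    by_contra! h
    exact I.pts_notMem_Ioo t j ⟨h, by linarith⟩
  exact ⟨t.succ, le_antisymm (hL.isRightSD_conj.le_of_isSD (I.sd t) hstart hlt) hle⟩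

/-- for a standard dyadic partition `I` and `A ∈ S(I)` with
`A ≠ [0,1]`, the interval `A ∪ Ā` belongs to `S(I)`. -/
theorem statement_0 {n : ℕ} (I : SDPartition n) (A : ℚ × ℚ)
    (hA : A ∈ SIn I) (hne : A ≠ ((0 : ℚ), (1 : ℚ))) :
    sdJoin A (conjSD A) ∈ SIn I := by
  obtain ⟨l, r⟩ := A
  rw [I.mem_SIn_iff] at hA ⊢
  obtain ⟨hl, hr, hlr⟩ := hA
  have hlt := hlr.lt
  by_cases hL : IsLeftSD l r
  · have hjoin : sdJoin (l, r) (conjSD (l, r)) = (l, 2 * r - l) := by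
      simp only [sdJoin, conjSD, hL, if_true]
      rw [min_eq_left hlt.le, max_eq_right (by linarith)]
    rw [hjoin]
    exact ⟨hl, hL.two_mul_sub_mem_range I hr, hL.isSD_parent⟩
  · have hjoin : sdJoin (l, r) (conjSD (l, r)) = (2 * l - r, r) := by
      simp only [sdJoin, conjSD, hL, if_false]
      rw [min_eq_right (by linarith), max_eq_left hlt.le]
    have hL' := hlr.isLeftSD_one_sub hL hne
    have hrefl := hL'.two_mul_sub_mem_range I.reflect (I.mem_range_reflect.mpr (by simpa using hl))
    rw [hjoin]
    refine ⟨?_, hr, ?_⟩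
    · convert I.mem_range_reflect.mp hrefl using 1
      ring
    · convert hL'.isSD_parent.one_sub using 1 <;> ring
end

section
/- Let I be a standard dyadic partition of [0,1]. The restriction of the midpoint map m to S(I) is a bijection from S(I) onto E(I). -/
/-! The key fact concerns the grids `2^{-s}ℤ`: an s.d. interval `[a, a + 2^{-t}]` whose
interior meets `2^{-s}ℤ` has `t ≤ s` (its interior misses the finer grid `2^{-t}ℤ`), so both
its endpoints lie on `2^{-s}ℤ`. Taking for `s` the grid through the midpoint of an s.d.
interval `A`, any s.d. interval inside `A` containing that midpoint in its interior is `A`;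
this gives injectivity and, when the midpoint of `A ∈ S(I)` is not a breakpoint, identifies
`A` with the piece of `I` through it. Taking for `s` the grid of the endpoints of an s.d.
interval whose midpoint is a breakpoint, no piece of `I` can straddle an endpoint, so both
endpoints are breakpoints; this gives surjectivity. -/

def OnGrid (s : ℕ) (x : ℚ) : Prop := ∃ j : ℤ, x = j / 2 ^ s

namespace OnGrid

variable {s : ℕ} {x y : ℚ}

lemma one_div_pow (s : ℕ) : OnGrid s (1 / 2 ^ s) := ⟨1, by simp⟩

lemma add (hx : OnGrid s x) (hy : OnGrid s y) : OnGrid s (x + y) := by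
  obtain ⟨i, rfl⟩ := hx
  obtain ⟨j, rfl⟩ := hy
  exact ⟨i + j, by push_cast; ring⟩

lemma mono {t : ℕ} (hx : OnGrid s x) (hst : s ≤ t) : OnGrid t x := by
  obtain ⟨j, rfl⟩ := hx
  obtain ⟨d, rfl⟩ := Nat.exists_eq_add_of_le hst
  exact ⟨j * 2 ^ d, by push_cast; rw [pow_add]; field_simp⟩

lemma add_one_div_le (hx : OnGrid s x) (hy : OnGrid s y) (hxy : x < y) : x + 1 / 2 ^ s ≤ y := by
  obtain ⟨i, rfl⟩ := hx
  obtain ⟨j, rfl⟩ := hy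
  have hpos : (0 : ℚ) < 2 ^ s := by positivity
  rw [div_lt_div_iff_of_pos_right hpos] at hxy
  rw [← add_div, div_le_div_iff_of_pos_right hpos]
  exact_mod_cast Int.add_one_le_of_lt (by exact_mod_cast hxy)

end OnGrid

lemma midQ_add_one_div (l : ℚ) (t : ℕ) : midQ (l, l + 1 / 2 ^ t) = l + 1 / 2 ^ (t + 1) := by
  simp only [midQ]
  rw [pow_succ]
  ring

namespace IsSD

variable {l r : ℚ}

lemma exists_onGrid (h : IsSD l r) : ∃ t, OnGrid t l ∧ r = l + 1 / 2 ^ t := by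
  obtain ⟨t, k, -, rfl, rfl⟩ := h
  exact ⟨t, ⟨k, by push_cast; rfl⟩, by ring⟩

lemma nonneg_s5 (h : IsSD l r) : 0 ≤ l := by
  obtain ⟨t, k, -, rfl, -⟩ := h
  positivity

lemma le_one_s5 (h : IsSD l r) : r ≤ 1 := by
  obtain ⟨t, k, hk, -, rfl⟩ := h
  rw [div_le_one (by positivity)]
  exact_mod_cast hk

lemma lt_s5 (h : IsSD l r) : l < r := by
  obtain ⟨t, -, rfl⟩ := h.exists_onGrid
  linarith [show (0 : ℚ) < 1 / 2 ^ t by positivity]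

lemma onGrid_of_mem_Ioo {s : ℕ} {x : ℚ} (h : IsSD l r) (hl : l < x) (hr : x < r)
    (hx : OnGrid s x) : OnGrid s l ∧ OnGrid s r := by
  obtain ⟨t, hlt, rfl⟩ := h.exists_onGrid
  rcases le_total t s with hts | hst
  · exact ⟨hlt.mono hts, (hlt.add (OnGrid.one_div_pow t)).mono hts⟩
  · exact absurd hr (not_lt.2 (hlt.add_one_div_le (hx.mono hst) hl))

lemma eq_of_le_of_le_of_midQ_mem_Ioo {l' r' : ℚ} (h : IsSD l r) (h' : IsSD l' r')
    (hl : l ≤ l') (hr : r' ≤ r) (h1 : l' < midQ (l, r)) (h2 : midQ (l, r) < r') :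
    l' = l ∧ r' = r := by
  obtain ⟨t, hlt, rfl⟩ := h.exists_onGrid
  rw [midQ_add_one_div] at h1 h2
  have hmid : OnGrid (t + 1) (l + 1 / 2 ^ (t + 1)) :=
    (hlt.mono t.le_succ).add (OnGrid.one_div_pow _)
  obtain ⟨hl', hr'⟩ := h'.onGrid_of_mem_Ioo h1 h2 hmid
  have e1 := hl'.add_one_div_le hmid h1
  have e2 := hmid.add_one_div_le hr' h2
  have : (1 : ℚ) / 2 ^ (t + 1) + 1 / 2 ^ (t + 1) = 1 / 2 ^ t := by rw [pow_succ]; ring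
  constructor <;> linarith

end IsSD

lemma injOn_midQ : Set.InjOn midQ SDSet := by
  rintro ⟨l, r⟩ (h : IsSD l r) ⟨l', r'⟩ (h' : IsSD l' r') hm
  have hsum : l + r = l' + r' := by unfold midQ at hm; linarith
  rcases le_total (r - l) (r' - l') with hlen | hlen
  · obtain ⟨rfl, rfl⟩ := h'.eq_of_le_of_le_of_midQ_mem_Ioo h (by linarith) (by linarith)
      (by unfold midQ; linarith [h.lt_s5]) (by unfold midQ; linarith [h.lt_s5])
    rfl
  · obtain ⟨rfl, rfl⟩ := h.eq_of_le_of_le_of_midQ_mem_Ioo h' (by linarith) (by linarith)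
      (by unfold midQ; linarith [h'.lt_s5]) (by unfold midQ; linarith [h'.lt_s5])
    rfl

lemma exists_isSD_midQ_eq {s j : ℕ} (h0 : 0 < j) (hj : j < 2 ^ s) :
    ∃ l r, IsSD l r ∧ midQ (l, r) = j / 2 ^ s := by
  induction s generalizing j with
  | zero => simp at hj; omega
  | succ s ih =>
    rw [pow_succ] at hj
    obtain ⟨k, rfl | rfl⟩ := Nat.even_or_odd' j
    · obtain ⟨l, r, h, hmid⟩ := ih (j := k) (by omega) (by omega)
      refine ⟨l, r, h, ?_⟩
      rw [hmid, pow_succ]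
      push_cast
      field_simp
    · refine ⟨k / 2 ^ s, (k + 1) / 2 ^ s, ⟨s, k, by omega, rfl, rfl⟩, ?_⟩
      simp only [midQ]
      rw [pow_succ]
      push_cast
      field_simp
      ring

lemma exists_castSucc_lt_and_lt_succ {α : Type*} [LinearOrder α] {n : ℕ} {f : Fin (n + 1) → α}
    {x : α} (h0 : f 0 ≤ x) (hx : ∀ i, f i ≠ x) {i : Fin (n + 1)} (hi : x < f i) :
    ∃ p : Fin n, f p.castSucc < x ∧ x < f p.succ := by
  induction i using Fin.induction with
  | zero => exact absurd hi (not_lt.2 h0)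
  | succ p ih =>
    by_cases hp : f p.castSucc < x
    · exact ⟨p, hp, hi⟩
    · exact ih (lt_of_le_of_ne (not_lt.1 hp) (hx _).symm)

namespace SDPartition

variable {n : ℕ} (I : SDPartition n)

lemma pts_le_or_le (i : Fin (n + 1)) (p : Fin n) :
    I.pts i ≤ I.pts p.castSucc ∨ I.pts p.succ ≤ I.pts i := by
  rcases le_or_gt i p.castSucc with h | h
  · exact .inl (I.mono.monotone h)
  · exact .inr (I.mono.monotone (Fin.castSucc_lt_iff_succ_le.1 h))

lemma exists_mem_Ioo {x : ℚ} (h0 : 0 ≤ x) (h1 : x < 1) (hx : ∀ i, I.pts i ≠ x) :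
    ∃ p : Fin n, I.pts p.castSucc < x ∧ x < I.pts p.succ :=
  exists_castSucc_lt_and_lt_succ (I.first ▸ h0) hx (i := Fin.last n) (I.last ▸ h1)

lemma exists_pts_eq_of_onGrid {s : ℕ} {x : ℚ} (hx : OnGrid s x) (h0 : 0 ≤ x) (h1 : x ≤ 1)
    {i : Fin (n + 1)} (hi1 : x - 1 / 2 ^ s < I.pts i) (hi2 : I.pts i < x + 1 / 2 ^ s) :
    ∃ j, I.pts j = x := by
  by_contra! hne
  have hx1 : x < 1 := h1.lt_of_ne fun h => hne (Fin.last n) (I.last.trans h.symm)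
  obtain ⟨p, hp1, hp2⟩ := I.exists_mem_Ioo h0 hx1 hne
  obtain ⟨hl, hr⟩ := (I.sd p).onGrid_of_mem_Ioo hp1 hp2 hx
  have e1 := hl.add_one_div_le hx hp1
  have e2 := hx.add_one_div_le hr hp2
  rcases I.pts_le_or_le i p with h | h <;> linarith

lemma exists_pts_eq_of_pts_eq_midQ {l r : ℚ} (h : IsSD l r) {i : Fin (n + 1)}
    (hi : I.pts i = midQ (l, r)) : (∃ p, I.pts p = l) ∧ ∃ q, I.pts q = r := by
  have hl0 := h.nonneg_s5
  have hr1 := h.le_one_s5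
  obtain ⟨t, hlt, rfl⟩ := h.exists_onGrid
  rw [midQ_add_one_div] at hi
  have hpos : (0 : ℚ) < 1 / 2 ^ (t + 1) := by positivity
  have htwice : (1 : ℚ) / 2 ^ t = 1 / 2 ^ (t + 1) + 1 / 2 ^ (t + 1) := by rw [pow_succ]; ring
  exact ⟨I.exists_pts_eq_of_onGrid hlt hl0 (by linarith) (i := i) (by linarith) (by linarith),
    I.exists_pts_eq_of_onGrid (hlt.add (OnGrid.one_div_pow t)) (by linarith) hr1 (i := i)
      (by linarith) (by linarith)⟩

lemma exists_isSD_midQ_eq_pts {i : Fin (n + 1)} (h0 : I.pts i ≠ 0) (h1 : I.pts i ≠ 1) :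
    ∃ l r, IsSD l r ∧ midQ (l, r) = I.pts i := by
  obtain ⟨p, rfl⟩ := Fin.exists_castSucc_eq.2 fun (h : i = Fin.last n) => h1 (by rw [h, I.last])
  obtain ⟨m, k, hk, hl, -⟩ := I.sd p
  rw [hl] at h0 ⊢
  exact exists_isSD_midQ_eq (Nat.pos_of_ne_zero fun hk0 => h0 (by simp [hk0])) hk

lemma mapsTo_midQ : Set.MapsTo midQ (SIn I) (EIn I) := by
  rintro A ⟨⟨i, j, -, rfl⟩, hA⟩
  have hc1 : I.pts i < midQ (I.pts i, I.pts j) := by unfold midQ; linarith [hA.lt_s5]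
  have hc2 : midQ (I.pts i, I.pts j) < I.pts j := by unfold midQ; linarith [hA.lt_s5]
  by_cases hbrk : ∃ t, I.pts t = midQ (I.pts i, I.pts j)
  · exact .inr ⟨hbrk, (hA.nonneg_s5.trans_lt hc1).ne', (hc2.trans_le hA.le_one_s5).ne⟩
  simp only [not_exists] at hbrk
  obtain ⟨p, hp1, hp2⟩ := I.exists_mem_Ioo (hA.nonneg_s5.trans hc1.le) (hc2.trans_le hA.le_one_s5) hbrk
  have hip : I.pts i ≤ I.pts p.castSucc := (I.pts_le_or_le i p).resolve_right (by linarith)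
  have hpj : I.pts p.succ ≤ I.pts j := (I.pts_le_or_le j p).resolve_left (by linarith)
  obtain ⟨hl, hr⟩ := hA.eq_of_le_of_le_of_midQ_mem_Ioo (I.sd p) hip hpj hp1 hp2
  exact .inl ⟨p, by rw [hl, hr]⟩

lemma surjOn_midQ : Set.SurjOn midQ (SIn I) (EIn I) := by
  rintro x (⟨p, rfl⟩ | ⟨⟨i, rfl⟩, h0, h1⟩)
  · exact ⟨_, ⟨⟨p.castSucc, p.succ, Fin.castSucc_lt_succ, rfl⟩, I.sd p⟩, rfl⟩
  · obtain ⟨l, r, h, hmid⟩ := I.exists_isSD_midQ_eq_pts h0 h1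
    obtain ⟨⟨p, rfl⟩, ⟨q, rfl⟩⟩ := I.exists_pts_eq_of_pts_eq_midQ h hmid.symm
    exact ⟨_, ⟨⟨p, q, I.mono.lt_iff_lt.1 h.lt_s5, rfl⟩, h⟩, hmid⟩

end SDPartition

/-- for a standard dyadic partition `I`, the midpoint map restricts
to a bijection from `S(I)` onto `E(I)`. -/
theorem statement_5 {n : ℕ} (I : SDPartition n) :
    Set.BijOn midQ (SIn I) (EIn I) :=
  ⟨I.mapsTo_midQ, injOn_midQ.mono fun _ hA => hA.2, I.surjOn_midQ⟩
end

section
/- Let (I, J) be a pair of standard dyadic n-partitions such that γ^I_J preserves signs on E. List S(I) in increasing midpoint order as A_1 <_mid ... <_mid A_{2n−1} and S(J) as B_1 <_mid ... <_mid B_{2n−1}. Then s(A_i) = s(B_i) for every i; consequently the half grid diagrams H_I and H_J are compatible (for each column index, the unique markings of H_I and H_J in that column are the same symbol). -/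
/-- `SignSpec s` says that `s` takes values in `{+1, -1}` on standard dyadic
intervals, `s([0,1]) = +1`, and for `A ≠ [0,1]`, `s A = s (A ∪ Ā)` if `A` is a
left interval while `s A = - s (A ∪ Ā)` if `A` is a right interval. -/
def SignSpec (s : ℚ × ℚ → ℤ) : Prop :=
  (∀ A ∈ SDSet, s A = 1 ∨ s A = -1) ∧
  s ((0 : ℚ), (1 : ℚ)) = 1 ∧
  ∀ A ∈ SDSet, A ≠ ((0 : ℚ), (1 : ℚ)) →
    (IsLeftSD A.1 A.2 → s A = s (sdJoin A (conjSD A))) ∧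
    (IsRightSD A.1 A.2 → s A = - s (sdJoin A (conjSD A)))

/-- `IsGamma I J γ` says that `γ = γ^I_J`: the piecewise linear map sending the
`i`-th breakpoint of `I` to the `i`-th breakpoint of `J` and linear on each
subinterval of `I`. -/
def IsGamma {n : ℕ} (I J : SDPartition n) (γ : ℚ → ℚ) : Prop :=
  ∀ i : Fin n, ∀ x : ℚ, I.pts i.castSucc ≤ x → x ≤ I.pts i.succ →
    γ x = J.pts i.castSucc +
      (J.pts i.succ - J.pts i.castSucc) / (I.pts i.succ - I.pts i.castSucc) *
        (x - I.pts i.castSucc)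

/-- `γ` preserves signs on `E`: `γ(E) = E` and every `e ∈ E` has the same sign
as `γ e`, where the sign of a point of `E` is the sign of the unique standard
dyadic interval having it as midpoint. -/
def PreservesSigns (s : ℚ × ℚ → ℤ) (γ : ℚ → ℚ) : Prop :=
  γ '' Edyadic = Edyadic ∧
  ∀ A B : ℚ × ℚ, A ∈ SDSet → B ∈ SDSet → γ (midQ A) = midQ B → s B = s A

/-- Strict version of the length order `<_len`. -/
def lenLT (A B : ℚ × ℚ) : Prop :=
  lenQ A < lenQ B ∨ (lenQ A = lenQ B ∧ midQ A < midQ B)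

/-- `p_x(A)`: one plus the (1-based) rank of `A ∈ S(I)` in the midpoint order. -/
noncomputable def px {n : ℕ} (I : SDPartition n) (A : ℚ × ℚ) : ℕ :=
  ({B ∈ SIn I | midQ B < midQ A}).ncard + 2

/-- the (1-based) rank of a positive interval `A ∈ S_+(I)` in the length order. -/
noncomputable def pyPos {n : ℕ} (I : SDPartition n) (s : ℚ × ℚ → ℤ) (A : ℚ × ℚ) : ℕ :=
  ({B ∈ SIn I | s B = 1 ∧ lenLT B A}).ncard + 1

/-- `p_y(A)`: the length-order rank of `A` if `s A = +1`, and of its conjugate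
otherwise. -/
noncomputable def py {n : ℕ} (I : SDPartition n) (s : ℚ × ℚ → ℤ) (A : ℚ × ℚ) : ℕ :=
  if s A = 1 then pyPos I s A else pyPos I s (conjSD A)

theorem StrictMono.eq_of_range_subset {β γ : Type*} [LinearOrder β] [Finite β] [Preorder γ]
    {f g : β → γ} (hf : StrictMono f) (hg : StrictMono g) (h : Set.range f ⊆ Set.range g) :
    f = g := by
  refine (hf.range_inj hg).mp (Set.eq_of_subset_of_ncard_le h ?_)
  rw [Set.ncard_range_of_injective hf.injective, Set.ncard_range_of_injective hg.injective]

theorem Nat.exists_le_lt_succ_of_le_of_lt {α : Type*} [LinearOrder α] (f : ℕ → α)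
    {i j : ℕ} {x : α} (hij : i ≤ j) (hi : f i ≤ x) (hj : x < f j) :
    ∃ l, i ≤ l ∧ l < j ∧ f l ≤ x ∧ x < f (l + 1) := by
  induction j, hij using Nat.le_induction with
  | base => exact absurd hi (not_le.mpr hj)
  | succ j hij ih =>
    rcases lt_or_ge x (f j) with hxj | hxj
    · obtain ⟨l, hil, hlj, hl⟩ := ih hxj
      exact ⟨l, hil, hlj.trans j.lt_succ_self, hl⟩
    · exact ⟨j, hij, j.lt_succ_self, hxj, hj⟩

theorem IsSD.eq_of_subset_of_mid_mem {l r l' r' : ℚ} (hA : IsSD l r) (hB : IsSD l' r')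
    (hl : l ≤ l') (hr : r' ≤ r) (hl' : l' < (l + r) / 2) (hr' : (l + r) / 2 < r') :
    l' = l ∧ r' = r := by
  obtain ⟨m, k, -, rfl, rfl⟩ := hA
  obtain ⟨m', k', -, rfl, rfl⟩ := hB
  rcases le_or_gt m' m with hm | hm
  · have : (1 : ℚ) / 2 ^ m ≤ 1 / 2 ^ m' :=
      one_div_le_one_div_of_le (by positivity) (pow_le_pow_right₀ one_le_two hm)
    constructor <;> linarith [add_div (k : ℚ) 1 (2 ^ m), add_div (k' : ℚ) 1 (2 ^ m')]
  · -- At scale `2 ^ m'` the midpoint `(2k+1)/2^(m+1)` of `[l, r]` becomes an integer strictly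
    -- between `k'` and `k'+1`.
    obtain ⟨d, rfl⟩ := Nat.exists_eq_add_of_lt hm
    have hmid :
        ((k : ℚ) / 2 ^ m + (k + 1) / 2 ^ m) / 2 = (2 * k + 1) * 2 ^ d / 2 ^ (m + d + 1) := by
      rw [pow_add, pow_succ]; field_simp; ring
    rw [hmid, div_lt_div_iff_of_pos_right (by positivity)] at hl' hr'
    have : k' < (2 * k + 1) * 2 ^ d := by exact_mod_cast hl'
    have : (2 * k + 1) * 2 ^ d < k' + 1 := by exact_mod_cast hr'
    omega

namespace SDPartition

variable {n : ℕ} (I : SDPartition n)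

/-- The breakpoints indexed by `ℕ`, constant equal to `1` from index `n` on. -/
def pt (t : ℕ) : ℚ := I.pts ⟨min t n, Nat.lt_succ_of_le (min_le_right t n)⟩

theorem pt_coe (i : Fin (n + 1)) : I.pt i = I.pts i :=
  congrArg I.pts (Fin.ext (min_eq_left (Nat.le_of_lt_succ i.isLt)))

theorem pt_castSucc (i : Fin n) : I.pt i = I.pts i.castSucc := I.pt_coe i.castSucc

theorem pt_succ (i : Fin n) : I.pt (i + 1) = I.pts i.succ := I.pt_coe i.succ

theorem pt_mono : Monotone I.pt := fun _ _ hst =>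
  I.mono.monotone (Fin.mk_le_mk.mpr (min_le_min_right n hst))

theorem pt_lt_pt {s t : ℕ} (hst : s < t) (ht : t ≤ n) : I.pt s < I.pt t :=
  I.mono (Fin.mk_lt_mk.mpr (by omega))

theorem isSD_pt {l : ℕ} (hl : l < n) : IsSD (I.pt l) (I.pt (l + 1)) := by
  simpa only [← pt_castSucc, ← pt_succ] using I.sd ⟨l, hl⟩

/-- The points of `E(I)` in increasing order: `node (2 l)` is the midpoint of the `l`-th
subinterval and `node (2 l + 1)` is the breakpoint `l + 1`. -/
def node (k : ℕ) : ℚ := (I.pt ((k + 1) / 2) + I.pt ((k + 2) / 2)) / 2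

theorem node_two_mul (l : ℕ) : I.node (2 * l) = (I.pt l + I.pt (l + 1)) / 2 := by
  simp only [node, show (2 * l + 1) / 2 = l by omega, show (2 * l + 2) / 2 = l + 1 by omega]

theorem node_two_mul_add_one (l : ℕ) : I.node (2 * l + 1) = I.pt (l + 1) := by
  simp only [node, show (2 * l + 1 + 1) / 2 = l + 1 by omega,
    show (2 * l + 1 + 2) / 2 = l + 1 by omega, add_self_div_two]

theorem node_lt_node {k k' : ℕ} (hk : k < k') (hk' : k' < 2 * n - 1) :
    I.node k < I.node k' := by
  have h1 := I.pt_mono (show (k + 1) / 2 ≤ (k' + 1) / 2 by omega)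
  have h2 := I.pt_mono (show (k + 2) / 2 ≤ (k' + 2) / 2 by omega)
  rcases (show (k + 1) / 2 < (k' + 1) / 2 ∨ (k + 2) / 2 < (k' + 2) / 2 by omega) with h | h
  · have := I.pt_lt_pt h (by omega)
    unfold node; linarith
  · have := I.pt_lt_pt h (by omega)
    unfold node; linarith

theorem exists_midQ_eq_node {A : ℚ × ℚ} (hA : A ∈ SIn I) :
    ∃ k < 2 * n - 1, midQ A = I.node k := by
  obtain ⟨⟨i, j, hij, rfl⟩, hsd⟩ := hA
  have hj : (j : ℕ) ≤ n := Nat.le_of_lt_succ j.isLt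
  have hlt : I.pts i < I.pts j := I.mono hij
  rw [midQ]
  rw [← I.pt_coe i, ← I.pt_coe j] at hsd hlt ⊢
  obtain ⟨l, hil, hlj, hl, hl'⟩ := Nat.exists_le_lt_succ_of_le_of_lt I.pt (Nat.le_of_lt hij)
    (show I.pt i ≤ (I.pt i + I.pt j) / 2 by linarith)
    (show (I.pt i + I.pt j) / 2 < I.pt j by linarith)
  rcases hl.lt_or_eq with hl | hl
  · obtain ⟨hil', hlj'⟩ := hsd.eq_of_subset_of_mid_mem (I.isSD_pt (by omega))
      (I.pt_mono hil) (I.pt_mono hlj) hl hl'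
    exact ⟨2 * l, by omega, by rw [node_two_mul, hil', hlj']⟩
  · have : l ≠ i := by rintro rfl; linarith
    refine ⟨2 * (l - 1) + 1, by omega, ?_⟩
    rw [node_two_mul_add_one, Nat.sub_add_cancel (by omega), hl]

end SDPartition

theorem IsGamma.apply_pt_add_mul {n : ℕ} {I J : SDPartition n} {γ : ℚ → ℚ}
    (hγ : IsGamma I J γ) {l : ℕ} (hl : l < n) {t : ℚ} (ht₀ : 0 ≤ t) (ht₁ : t ≤ 1) :
    γ (I.pt l + t * (I.pt (l + 1) - I.pt l)) = J.pt l + t * (J.pt (l + 1) - J.pt l) := by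
  have hlt := I.pt_lt_pt l.lt_succ_self hl
  have key := hγ ⟨l, hl⟩ (I.pt l + t * (I.pt (l + 1) - I.pt l))
  simp only [← SDPartition.pt_castSucc, ← SDPartition.pt_succ] at key
  rw [key (by nlinarith) (by nlinarith)]
  field_simp [sub_ne_zero.mpr hlt.ne']
  ring

theorem IsGamma.apply_node {n : ℕ} {I J : SDPartition n} {γ : ℚ → ℚ} (hγ : IsGamma I J γ)
    {k : ℕ} (hk : k < 2 * n - 1) : γ (I.node k) = J.node k := by
  obtain ⟨l, rfl | rfl⟩ := Nat.even_or_odd' k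
  · have := hγ.apply_pt_add_mul (l := l) (by omega) (t := 1 / 2) (by norm_num) (by norm_num)
    rw [SDPartition.node_two_mul, SDPartition.node_two_mul]
    convert this using 2 <;> ring
  · have := hγ.apply_pt_add_mul (l := l) (by omega) (t := 1) (by norm_num) le_rfl
    rw [SDPartition.node_two_mul_add_one, SDPartition.node_two_mul_add_one]
    convert this using 2 <;> ring

theorem midQ_eq_node_of_enum {n : ℕ} {I : SDPartition n} {a : Fin (2 * n - 1) → ℚ × ℚ}
    (ha : StrictMono fun i => midQ (a i)) (har : Set.range a = SIn I) (i : Fin (2 * n - 1)) :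
    midQ (a i) = I.node i := by
  refine congrFun (ha.eq_of_range_subset (fun i j hij => I.node_lt_node hij j.isLt) ?_) i
  rintro _ ⟨i, rfl⟩
  obtain ⟨k, hk, hki⟩ := I.exists_midQ_eq_node (har ▸ Set.mem_range_self i)
  exact ⟨⟨k, hk⟩, hki.symm⟩

theorem px_eq_of_enum {n : ℕ} {I : SDPartition n} {a : Fin (2 * n - 1) → ℚ × ℚ}
    (ha : StrictMono fun i => midQ (a i)) (har : Set.range a = SIn I) (i : Fin (2 * n - 1)) :
    px I (a i) = i + 2 := by
  have hset : {B ∈ SIn I | midQ B < midQ (a i)} = a '' Set.Iio i := by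
    rw [← har]
    ext B
    constructor
    · rintro ⟨⟨j, rfl⟩, hj⟩
      exact ⟨j, ha.lt_iff_lt.mp hj, rfl⟩
    · rintro ⟨j, hj, rfl⟩
      exact ⟨⟨j, rfl⟩, ha hj⟩
  rw [px, hset, Set.ncard_image_of_injective _ (ha.injective.of_comp (f := midQ)),
    ← Finset.coe_Iio, Set.ncard_coe_finset, Fin.card_Iio]

theorem statement_15_general {n : ℕ} (I J : SDPartition n) (s : ℚ × ℚ → ℤ)
    (γ : ℚ → ℚ) (hγ : IsGamma I J γ)
    (hpres : PreservesSigns s γ)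
    (a b : Fin (2 * n - 1) → ℚ × ℚ)
    (ha : StrictMono fun i => midQ (a i)) (har : Set.range a = SIn I)
    (hb : StrictMono fun i => midQ (b i)) (hbr : Set.range b = SIn J) :
    (∀ i, s (a i) = s (b i)) ∧
    ∀ A ∈ SIn I, ∀ B ∈ SIn J, px I A = px J B → s A = s B := by
  have hsign : ∀ i, s (a i) = s (b i) := by
    intro i
    refine (hpres.2 _ _ (har ▸ Set.mem_range_self i : a i ∈ SIn I).2
      (hbr ▸ Set.mem_range_self i : b i ∈ SIn J).2 ?_).symm
    rw [midQ_eq_node_of_enum ha har, midQ_eq_node_of_enum hb hbr, hγ.apply_node i.isLt]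
  refine ⟨hsign, ?_⟩
  rintro _ hA _ hB hpx
  obtain ⟨i, rfl⟩ := har ▸ hA
  obtain ⟨j, rfl⟩ := hbr ▸ hB
  rw [px_eq_of_enum ha har, px_eq_of_enum hb hbr] at hpx
  rw [Fin.ext (Nat.add_right_cancel hpx)]
  exact hsign j

/-- if `γ^I_J` preserves signs on `E` and `S(I)`, `S(J)` are
listed in increasing midpoint order as `a` and `b`, then `s (a i) = s (b i)`
for every `i`; consequently the half grid diagrams `H_I` and `H_J` are
compatible: intervals occupying the same column carry the same symbol. -/
theorem statement_15 {n : ℕ} (I J : SDPartition n) (s : ℚ × ℚ → ℤ)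
    (hs : SignSpec s) (γ : ℚ → ℚ) (hγ : IsGamma I J γ)
    (hpres : PreservesSigns s γ)
    (a b : Fin (2 * n - 1) → ℚ × ℚ)
    (ha : StrictMono fun i => midQ (a i)) (har : Set.range a = SIn I)
    (hb : StrictMono fun i => midQ (b i)) (hbr : Set.range b = SIn J) :
    (∀ i, s (a i) = s (b i)) ∧
    ∀ A ∈ SIn I, ∀ B ∈ SIn J, px I A = px J B → s A = s B :=
  statement_15_general I J s γ hγ hpres a b ha har hb hbr
end
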